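/- arXiv:2102.05886 — 7 statements merged into one kernel-verified Lean document; each statement's English description precedes it below -/
import Mathlib

section
/- Let f₀, f₁, ..., fₚ : ℝⁿ → ℝ. Suppose (a) there exists x₀ ∈ ℝⁿ with fᵢ(x₀) > 0 for all i = 1,...,p, and (b) the set Im(f₀, -f₁, ..., -fₚ) + ℝ₊^{p+1} is convex. Then the implication [(fᵢ(x) ≥ 0 for all i = 1,...,p) ⟹ f₀(x) ≥ 0 for all x] holds if and only if there exist α₁,...,αₚ ≥ 0 such that f₀(x) - Σᵢ αᵢ fᵢ(x) ≥ 0 for all x ∈ ℝⁿ. -/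
open Pointwise

theorem s_procedure_epi_convex (n p : ℕ)
    (f0 : (Fin n → ℝ) → ℝ) (f : Fin p → (Fin n → ℝ) → ℝ)
    (hS : ∃ x0 : Fin n → ℝ, ∀ i, 0 < f i x0)
    (hconv : Convex ℝ
      (({z : Fin (p + 1) → ℝ | ∃ x, z = Fin.cons (f0 x) (fun i => -(f i x))} +
        {z : Fin (p + 1) → ℝ | ∀ i, 0 ≤ z i} : Set (Fin (p + 1) → ℝ)))) :
    (∀ x, (∀ i, 0 ≤ f i x) → 0 ≤ f0 x) ↔
      ∃ α : Fin p → ℝ, (∀ i, 0 ≤ α i) ∧ ∀ x, 0 ≤ f0 x - ∑ i, α i * f i x := by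
  constructor
  · intro himp
    obtain ⟨x0, hx0⟩ := hS
    set V : Set (Fin (p + 1) → ℝ) :=
      {z : Fin (p + 1) → ℝ | ∃ x, z = Fin.cons (f0 x) (fun i => -(f i x))} with hV
    set K : Set (Fin (p + 1) → ℝ) := {z : Fin (p + 1) → ℝ | ∀ i, 0 ≤ z i} with hK
    set A : Set (Fin (p + 1) → ℝ) := V + K with hA
    set U : Set (Fin (p + 1) → ℝ) := {z : Fin (p + 1) → ℝ | ∀ i, z i < 0} with hU
    have hUopen : IsOpen U := by
      have : U = ⋂ i, (fun z : Fin (p + 1) → ℝ => z i) ⁻¹' Set.Iio 0 := by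
        ext z; simp [hU, Set.mem_iInter]
      rw [this]
      exact isOpen_iInter_of_finite fun i => (continuous_apply i).isOpen_preimage _ isOpen_Iio
    have hUconv : Convex ℝ U := by
      intro a ha b hb s t hs ht hst
      intro i
      simp only [Pi.add_apply, Pi.smul_apply, smul_eq_mul]
      rcases eq_or_lt_of_le hs with rfl | hs'
      · have ht1 : t = 1 := by linarith
        have := hb i
        rw [ht1]; simpa using this
      · have h1 : s * a i < 0 := mul_neg_of_pos_of_neg hs' (ha i)
        have h2 : t * b i ≤ 0 := mul_nonpos_of_nonneg_of_nonpos ht (hb i).le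
        linarith
    have hdisj : Disjoint U A := by
      rw [Set.disjoint_left]
      rintro z hzU ⟨v, hv, w, hw, rfl⟩
      obtain ⟨x, rfl⟩ := hv
      have hfx : ∀ i, 0 ≤ f i x := by
        intro i
        have h1 : ((Fin.cons (f0 x) (fun i => -(f i x)) : Fin (p + 1) → ℝ) + w) i.succ < 0 :=
          hzU i.succ
        have h2 := hw i.succ
        simp only [Pi.add_apply, Fin.cons_succ] at h1
        linarith
      have h0 := himp x hfx
      have h1 : ((Fin.cons (f0 x) (fun i => -(f i x)) : Fin (p + 1) → ℝ) + w) 0 < 0 := hzU 0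
      have h2 := hw 0
      simp only [Pi.add_apply, Fin.cons_zero] at h1
      linarith
    obtain ⟨φ, u, hφU, hφA⟩ := geometric_hahn_banach_open hUconv hUopen hconv hdisj
    -- the coordinates of φ
    set lam : Fin (p + 1) → ℝ := fun i => φ (fun j => if i = j then 1 else 0) with hlam
    have hφsum : ∀ z : Fin (p + 1) → ℝ, φ z = ∑ i, z i * lam i := by
      intro z
      have := (φ : (Fin (p + 1) → ℝ) →ₗ[ℝ] ℝ).pi_apply_eq_sum_univ z
      simpa [hlam, smul_eq_mul] using this
    -- nonnegativity of lam
    have hlamnn : ∀ i, 0 ≤ lam i := by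
      intro i
      by_contra hneg
      push_neg at hneg
      set S : ℝ := φ (fun _ => (-1 : ℝ)) with hSdef
      set t : ℝ := max 0 ((u - S + 1) / (-lam i)) with htdef
      have ht0 : 0 ≤ t := le_max_left _ _
      have hlamipos : 0 < -lam i := by linarith
      have hti : u - S + 1 ≤ t * (-lam i) := by
        have h2 : (u - S + 1) / (-lam i) ≤ t := le_max_right _ _
        calc u - S + 1 = ((u - S + 1) / (-lam i)) * (-lam i) := by
              rw [div_mul_cancel₀ _ (ne_of_gt hlamipos)]
          _ ≤ t * (-lam i) := mul_le_mul_of_nonneg_right h2 hlamipos.le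
      set z : Fin (p + 1) → ℝ :=
        (fun _ => (-1 : ℝ)) + (-t) • (fun j => if i = j then (1:ℝ) else 0) with hzdef
      have hzU : z ∈ U := by
        intro j
        simp only [hzdef, Pi.add_apply, Pi.smul_apply, smul_eq_mul]
        by_cases h : i = j <;> simp [h] <;> linarith
      have hφz : φ z = S + (-t) * lam i := by
        simp only [hzdef, map_add, map_smul, smul_eq_mul, hSdef, hlam]
      have := hφU z hzU
      rw [hφz] at this
      nlinarith
    -- u is nonnegative
    have hu0 : 0 ≤ u := by
      by_contra hu
      push_neg at hu
      set S : ℝ := φ (fun _ => (1 : ℝ)) with hSdef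
      by_cases hSpos : 0 < S
      · have hε : (0:ℝ) < -u / S := div_pos (by linarith) hSpos
        have hmem : ((-(-u / S)) • (fun _ => (1:ℝ)) : Fin (p + 1) → ℝ) ∈ U := by
          intro j; simp only [Pi.smul_apply, smul_eq_mul, mul_one]; linarith
        have h1 := hφU _ hmem
        rw [map_smul] at h1
        simp only [smul_eq_mul, ← hSdef] at h1
        have h2 : -(-u / S) * S = u := by field_simp
        linarith
      · push_neg at hSpos
        have hmem : ((-1 : ℝ) • (fun _ => (1:ℝ)) : Fin (p + 1) → ℝ) ∈ U := by
          intro j; simp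
        have h1 := hφU _ hmem
        rw [map_smul] at h1
        simp only [smul_eq_mul, ← hSdef] at h1
        linarith
    -- every point of V has nonneg φ
    have hVpos : ∀ x, 0 ≤ lam 0 * f0 x - ∑ i : Fin p, lam i.succ * f i x := by
      intro x
      have hmem : (Fin.cons (f0 x) (fun i => -(f i x)) : Fin (p + 1) → ℝ) ∈ A := by
        refine ⟨_, ⟨x, rfl⟩, 0, fun i => le_refl 0, by simp⟩
      have h1 := hφA _ hmem
      rw [hφsum] at h1
      rw [Fin.sum_univ_succ] at h1
      simp only [Fin.cons_zero, Fin.cons_succ] at h1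
      have h2 : (0:ℝ) ≤ f0 x * lam 0 + ∑ i : Fin p, -f i x * lam i.succ := le_trans hu0 h1
      have h3 : ∑ i : Fin p, -f i x * lam i.succ = -∑ i : Fin p, lam i.succ * f i x := by
        rw [← Finset.sum_neg_distrib]
        apply Finset.sum_congr rfl
        intro i _; ring
      rw [h3] at h2
      linarith
    -- lam 0 is positive
    have hlam0 : 0 < lam 0 := by
      rcases eq_or_lt_of_le (hlamnn 0) with h0 | h0
      · exfalso
        have hx0' := hVpos x0
        rw [← h0] at hx0'
        simp only [zero_mul, zero_sub, neg_nonneg] at hx0'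
        have hall : ∀ i : Fin p, lam i.succ = 0 := by
          intro i
          have hnn : ∀ j ∈ Finset.univ, (0:ℝ) ≤ lam (Fin.succ j) * f j x0 :=
            fun j _ => mul_nonneg (hlamnn _) (hx0 j).le
          have hz := (Finset.sum_eq_zero_iff_of_nonneg hnn).mp
            (le_antisymm hx0' (Finset.sum_nonneg hnn)) i (Finset.mem_univ i)
          have hfpos := hx0 i
          nlinarith
        have hφzero : ∀ z : Fin (p + 1) → ℝ, φ z = 0 := by
          intro z
          rw [hφsum]
          apply Finset.sum_eq_zero
          intro j _
          rcases Fin.eq_zero_or_eq_succ j with rfl | ⟨i, rfl⟩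
          · rw [← h0]; ring
          · rw [hall i]; ring
        have hUne : ((fun _ => (-1:ℝ)) : Fin (p + 1) → ℝ) ∈ U := fun j => by norm_num
        have hAne : (Fin.cons (f0 x0) (fun i => -(f i x0)) : Fin (p + 1) → ℝ) ∈ A :=
          ⟨_, ⟨x0, rfl⟩, 0, fun i => le_refl 0, by simp⟩
        have h1 := hφU _ hUne
        have h2 := hφA _ hAne
        rw [hφzero] at h1
        rw [hφzero] at h2
        linarith
      · exact h0
    refine ⟨fun i => lam i.succ / lam 0, fun i => div_nonneg (hlamnn _) hlam0.le, ?_⟩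
    intro x
    have h := hVpos x
    have heq : f0 x - ∑ i, lam i.succ / lam 0 * f i x
        = (lam 0 * f0 x - ∑ i : Fin p, lam i.succ * f i x) / lam 0 := by
      rw [sub_div, Finset.sum_div]
      congr 1
      · rw [eq_div_iff (ne_of_gt hlam0)]; ring
      · apply Finset.sum_congr rfl
        intro i _
        rw [div_mul_eq_mul_div]
    rw [heq]
    positivity
  · rintro ⟨α, hα, hineq⟩ x hx
    have h := hineq x
    have hsum : 0 ≤ ∑ i, α i * f i x :=
      Finset.sum_nonneg fun i _ => mul_nonneg (hα i) (hx i)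
    linarith
end

section
/- Let f₀, f₁, ..., fₚ : ℝⁿ → ℝ, 𝒦 = {β ∈ ℝ^{p+1} : β₀ < 0, βᵢ ≤ 0 for i ≥ 1}, ℱ = Im(f₀, -f₁, ..., -fₚ). If there exist α₁,...,αₚ ≥ 0 with f₀(x) - Σᵢ αᵢ fᵢ(x) ≥ 0 for all x ∈ ℝⁿ, then (convexHull ℱ) ∩ 𝒦 = ∅. -/
theorem C_implies_coF_inter_K_empty (n p : ℕ)
    (f0 : (Fin n → ℝ) → ℝ) (f : Fin p → (Fin n → ℝ) → ℝ)
    (hC : ∃ α : Fin p → ℝ, (∀ i, 0 ≤ α i) ∧ ∀ x, 0 ≤ f0 x - ∑ i, α i * f i x) :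
    (convexHull ℝ {z : Fin (p + 1) → ℝ | ∃ x, z = Fin.cons (f0 x) (fun i => -(f i x))} ∩
      {β : Fin (p + 1) → ℝ | β 0 < 0 ∧ ∀ i : Fin p, β i.succ ≤ 0}) = ∅ := by
  obtain ⟨α, hα, hpos⟩ := hC
  set L : (Fin (p + 1) → ℝ) → ℝ := fun z => z 0 + ∑ i, α i * z i.succ with hL
  have hlin : IsLinearMap ℝ L := by
    constructor
    · intro x y
      simp [hL, mul_add, Finset.sum_add_distrib]
      ring
    · intro c x
      simp [hL, Finset.mul_sum, mul_add]
      exact Finset.sum_congr rfl fun i _ => by ring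
  have hconv : Convex ℝ {z : Fin (p+1) → ℝ | 0 ≤ L z} := convex_halfSpace_ge hlin 0
  have hsub : convexHull ℝ {z : Fin (p + 1) → ℝ | ∃ x, z = Fin.cons (f0 x) (fun i => -(f i x))}
      ⊆ {z | 0 ≤ L z} := by
    apply convexHull_min _ hconv
    rintro z ⟨x, rfl⟩
    have := hpos x
    simp only [hL, Set.mem_setOf_eq, Fin.cons_zero, Fin.cons_succ]
    have : (∑ i, α i * -(f i x)) = -∑ i, α i * f i x := by
      simp [Finset.sum_neg_distrib, mul_neg]
    rw [this]
    linarith [hpos x]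
  ext β
  simp only [Set.mem_inter_iff, Set.mem_empty_iff_false, iff_false]
  rintro ⟨hmem, hβ0, hβi⟩
  have h1 : 0 ≤ L β := hsub hmem
  have h2 : L β < 0 := by
    have hsum : (∑ i, α i * β i.succ) ≤ 0 :=
      Finset.sum_nonpos fun i _ => mul_nonpos_of_nonneg_of_nonpos (hα i) (hβi i)
    simp only [hL]
    linarith
  linarith
end

section
/- Let f₀, f₁, ..., fₚ : ℝⁿ → ℝ, 𝒦 = {β ∈ ℝ^{p+1} : β₀ < 0, βᵢ ≤ 0 for i ≥ 1}, ℱ = Im(f₀, -f₁, ..., -fₚ). Suppose (convexHull ℱ) ∩ 𝒦 = ∅ and there exists x₀ with fᵢ(x₀) > 0 for all i = 1,...,p. Then there exist α₁,...,αₚ ≥ 0 such that f₀(x) - Σᵢ αᵢ fᵢ(x) ≥ 0 for all x ∈ ℝⁿ. -/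
/-!
Let `P` be the open positive orthant. Since `convexHull ℱ` misses `𝒦 ⊇ -P`, the open convex set
`convexHull ℱ + P` avoids `0`, and a separating hyperplane gives `c` with `0 < c ⬝ᵥ (z + q)` for all
`z ∈ convexHull ℱ`, `q ∈ P`. Letting `q` shrink to `0`, resp. grow along a coordinate axis, yields
`0 ≤ c ⬝ᵥ z` and `0 ≤ c`. The Slater point `x₀` makes `c₀ > 0`: adding the positive vector
`(t, f₁ x₀, …, fₚ x₀)` to the point of `ℱ` at `x₀` gives `(f₀ x₀ + t) e₀`. Then `αᵢ = cᵢ / c₀`.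
-/

open Set

theorem nonneg_of_forall_pos_add_mul_pos {a b : ℝ} (h : ∀ t > 0, 0 < a + t * b) :
    0 ≤ a ∧ 0 ≤ b := by
  have hb : 0 ≤ b := by
    by_contra! hb
    have := h ((|a| + 1) / -b) (div_pos (by positivity) (neg_pos.2 hb))
    rw [div_mul_eq_mul_div, div_neg, mul_div_assoc, div_self hb.ne, mul_one] at this
    linarith [le_abs_self a]
  refine ⟨?_, hb⟩
  by_contra! ha
  have := h (-a / (b + 1)) (div_pos (neg_pos.2 ha) (by linarith))
  have hsum : a + -a / (b + 1) * b = a / (b + 1) := by field_simp; ring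
  rw [hsum] at this
  exact (div_neg_of_neg_of_pos ha (by linarith)).not_gt this

theorem exists_dotProduct_pos_of_zero_notMem {ι : Type*} [Fintype ι] {S : Set (ι → ℝ)}
    (hconv : Convex ℝ S) (hopen : IsOpen S) (h0 : 0 ∉ S) :
    ∃ c : ι → ℝ, ∀ y ∈ S, 0 < c ⬝ᵥ y := by
  classical
  obtain ⟨ψ, hψ⟩ := geometric_hahn_banach_point_open hconv hopen h0
  refine ⟨(dotProductEquiv ℝ ι).symm ψ.toLinearMap, fun y hy => ?_⟩
  have key := LinearMap.congr_fun ((dotProductEquiv ℝ ι).apply_symm_apply ψ.toLinearMap) y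
  have := hψ y hy
  rw [map_zero, ← ContinuousLinearMap.coe_coe, ← key] at this
  exact this

section PositiveOrthant

open scoped Pointwise

variable {ι : Type*} [Fintype ι]

theorem exists_dotProduct_add_pos_of_forall_not_neg {C : Set (ι → ℝ)} (hC : Convex ℝ C)
    (hdisj : ∀ z ∈ C, ¬ ∀ i, z i < 0) :
    ∃ c : ι → ℝ, ∀ z ∈ C, ∀ q : ι → ℝ, (∀ i, 0 < q i) → 0 < c ⬝ᵥ (z + q) := by
  set P : Set (ι → ℝ) := univ.pi fun _ => Ioi 0
  have hP : Convex ℝ P := convex_pi fun _ _ => convex_Ioi 0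
  have hPopen : IsOpen P := isOpen_set_pi finite_univ fun _ _ => isOpen_Ioi
  have h0 : (0 : ι → ℝ) ∉ C + P := by
    rintro ⟨z, hz, q, hq, hzq⟩
    refine hdisj z hz fun i => ?_
    have hqi : 0 < q i := hq i (mem_univ i)
    have := congr_fun hzq i
    simp only [Pi.add_apply, Pi.zero_apply] at this
    linarith
  obtain ⟨c, hc⟩ := exists_dotProduct_pos_of_zero_notMem (hC.add hP) hPopen.add_left h0
  exact ⟨c, fun z hz q hq => hc _ (add_mem_add hz fun i _ => hq i)⟩

variable {c z : ι → ℝ}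

theorem dotProduct_nonneg_of_forall_pos_add
    (h : ∀ q : ι → ℝ, (∀ i, 0 < q i) → 0 < c ⬝ᵥ (z + q)) : 0 ≤ c ⬝ᵥ z := by
  refine (nonneg_of_forall_pos_add_mul_pos (b := c ⬝ᵥ 1) fun t ht => ?_).1
  simpa [dotProduct_add, dotProduct_smul] using h (t • 1) fun _ => by simpa using ht

theorem nonneg_of_forall_dotProduct_add_pos [DecidableEq ι]
    (h : ∀ q : ι → ℝ, (∀ i, 0 < q i) → 0 < c ⬝ᵥ (z + q)) (i : ι) : 0 ≤ c i := by
  refine (nonneg_of_forall_pos_add_mul_pos (a := c ⬝ᵥ (z + 1)) fun t ht => ?_).2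
  have hq : ∀ j, 0 < (1 + t • Pi.single i 1 : ι → ℝ) j := fun j => by
    have hj : 0 ≤ (Pi.single i 1 : ι → ℝ) j :=
      (Pi.single_nonneg.2 zero_le_one : (0 : ι → ℝ) ≤ Pi.single i 1) j
    simp only [Pi.add_apply, Pi.one_apply, Pi.smul_apply, smul_eq_mul]
    exact add_pos_of_pos_of_nonneg one_pos (mul_nonneg ht.le hj)
  simpa [← add_assoc, dotProduct_add, dotProduct_smul] using h _ hq

end PositiveOrthant

theorem coF_inter_K_empty_and_slater_implies_C (n p : ℕ)
    (f0 : (Fin n → ℝ) → ℝ) (f : Fin p → (Fin n → ℝ) → ℝ)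
    (hdisj : (convexHull ℝ {z : Fin (p + 1) → ℝ | ∃ x, z = Fin.cons (f0 x) (fun i => -(f i x))} ∩
      {β : Fin (p + 1) → ℝ | β 0 < 0 ∧ ∀ i : Fin p, β i.succ ≤ 0}) = ∅)
    (hS : ∃ x0 : Fin n → ℝ, ∀ i, 0 < f i x0) :
    ∃ α : Fin p → ℝ, (∀ i, 0 ≤ α i) ∧ ∀ x, 0 ≤ f0 x - ∑ i, α i * f i x := by
  obtain ⟨x0, hx0⟩ := hS
  obtain ⟨c, hc⟩ := exists_dotProduct_add_pos_of_forall_not_neg (convex_convexHull ℝ _)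
    fun z hz hneg => eq_empty_iff_forall_notMem.1 hdisj z ⟨hz, hneg 0, fun i => (hneg i.succ).le⟩
  have hF : ∀ x, (Fin.cons (f0 x) fun i => -(f i x) : Fin (p + 1) → ℝ) ∈
      convexHull ℝ {z | ∃ x, z = Fin.cons (f0 x) fun i => -(f i x)} :=
    fun x => subset_convexHull ℝ _ ⟨x, rfl⟩
  have hc_nonneg : ∀ i, 0 ≤ c i := nonneg_of_forall_dotProduct_add_pos (hc _ (hF x0))
  have hc0 : 0 < c 0 := by
    have hpos := hc _ (hF x0) (Fin.cons (|f0 x0| + 1) fun i => f i x0)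
      (Fin.cases (show (0:ℝ) < |f0 x0| + 1 by positivity) hx0)
    simp only [dotProduct, Pi.add_apply, Fin.sum_univ_succ, Fin.cons_zero, Fin.cons_succ,
      neg_add_cancel, mul_zero, Finset.sum_const_zero, add_zero] at hpos
    exact pos_of_mul_pos_left hpos (by linarith [neg_abs_le (f0 x0)])
  refine ⟨fun i => c i.succ / c 0, fun i => div_nonneg (hc_nonneg _) hc0.le, fun x => ?_⟩
  have hx := dotProduct_nonneg_of_forall_pos_add (hc _ (hF x))
  simp only [dotProduct, Fin.sum_univ_succ, Fin.cons_zero, Fin.cons_succ, mul_neg,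
    Finset.sum_neg_distrib, le_add_neg_iff_add_le, zero_add] at hx
  rw [sub_nonneg]
  simp only [div_mul_eq_mul_div, ← Finset.sum_div, div_le_iff₀ hc0]
  linarith
end

section
/- Let f₀, f₁, ..., fₚ : ℝⁿ → ℝ and ℱ = Im(f₀, -f₁, ..., -fₚ). Assume there exists x₀ with fᵢ(x₀) > 0 for all i = 1,...,p, and there exists a set 𝒵 ⊆ ℝ₊^{p+1} with 0 ∈ 𝒵 such that ℝ₊ · (ℱ + 𝒵) is convex. If (fᵢ(x) ≥ 0 for all i = 1,...,p) implies f₀(x) ≥ 0 for all x ∈ ℝⁿ, then there exist α₁,...,αₚ ≥ 0 such that f₀(x) - Σᵢ αᵢ fᵢ(x) ≥ 0 for all x ∈ ℝⁿ. -/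
/-!
The cone `ℝ₊ · (ℱ + 𝒵)` is convex and, by the implication hypothesis and `𝒵 ≥ 0`, misses the
open negative orthant. Hahn–Banach separates the two by a functional `φ` that is negative on the
orthant, hence has nonnegative coefficients `(λ₀, λ₁, …, λₚ)` not all zero, and nonnegative on
the cone, hence `λ₀ f₀ ≥ ∑ λᵢ fᵢ` (a Fritz John condition). The Slater point forces `λ₀ > 0`, and
`αᵢ = λᵢ / λ₀` are the multipliers.
-/

open Pointwise Set

theorem exists_dual_neg_on_nonneg_on_of_disjoint_cone {E : Type*} [TopologicalSpace E]
    [AddCommGroup E] [Module ℝ E] [IsTopologicalAddGroup E] [ContinuousSMul ℝ E] {O C : Set E}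
    (hO : Convex ℝ O) (hO' : IsOpen O) (hC : Convex ℝ C) (h0 : (0 : E) ∈ C)
    (hsmul : ∀ t : ℝ, 0 < t → ∀ w ∈ C, t • w ∈ C) (hOC : Disjoint O C) :
    ∃ φ : StrongDual ℝ E, (∀ w ∈ O, φ w < 0) ∧ ∀ w ∈ C, 0 ≤ φ w := by
  obtain ⟨φ, u, hφO, hφC⟩ := geometric_hahn_banach_open hO hO' hC hOC
  have hu : u ≤ 0 := by simpa using hφC 0 h0
  refine ⟨φ, fun w hw => (hφO w hw).trans_le hu, fun w hw => ?_⟩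
  by_contra! hneg
  have ht : 0 < (u - 1) / φ w := div_pos_of_neg_of_neg (by linarith) hneg
  have := hφC _ (hsmul _ ht w hw)
  rw [map_smul, smul_eq_mul, div_mul_cancel₀ _ hneg.ne] at this
  linarith

theorem LinearMap.apply_eq_sum_mul_apply_single {ι R : Type*} [Fintype ι] [DecidableEq ι]
    [CommSemiring R] (φ : (ι → R) →ₗ[R] R) (w : ι → R) :
    φ w = ∑ j, φ (Pi.single j 1) * w j := by
  conv_lhs => rw [pi_eq_sum_univ' w]
  simp only [map_sum, map_smul, smul_eq_mul, mul_comm]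

theorem apply_single_nonneg_and_sum_pos_of_neg_on_negOrthant {ι : Type*} [Fintype ι]
    [DecidableEq ι] (φ : StrongDual ℝ (ι → ℝ)) (h : ∀ w ∈ univ.pi fun _ => Iio (0 : ℝ), φ w < 0) :
    (∀ j, 0 ≤ φ (Pi.single j 1)) ∧ 0 < ∑ j, φ (Pi.single j 1) := by
  have hclosure : closure (univ.pi fun _ => Iio (0 : ℝ)) ⊆ {w | φ w ≤ 0} :=
    closure_minimal (fun w hw => (h w hw).le) (isClosed_le φ.continuous continuous_const)
  rw [closure_pi_set, closure_Iio] at hclosure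
  constructor
  · intro j
    have hmem : Pi.single j (-1 : ℝ) ∈ univ.pi fun _ => Iic (0 : ℝ) := by
      intro k _
      rcases eq_or_ne k j with rfl | hk <;> simp [*]
    simpa [Pi.single_neg] using hclosure hmem
  · have := h (fun _ => -1) (by simp)
    rw [← φ.coe_coe, LinearMap.apply_eq_sum_mul_apply_single] at this
    simpa using this

theorem exists_nonneg_multipliers_of_fritzJohn {X ι : Type*} [Fintype ι] {f₀ : X → ℝ}
    {f : ι → X → ℝ} (hS : ∃ x₀, ∀ i, 0 < f i x₀) {c₀ : ℝ} {c : ι → ℝ} (hc₀ : 0 ≤ c₀)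
    (hc : ∀ i, 0 ≤ c i) (hpos : 0 < c₀ + ∑ i, c i) (h : ∀ x, ∑ i, c i * f i x ≤ c₀ * f₀ x) :
    ∃ α : ι → ℝ, (∀ i, 0 ≤ α i) ∧ ∀ x, 0 ≤ f₀ x - ∑ i, α i * f i x := by
  obtain ⟨x₀, hx₀⟩ := hS
  have hc₀' : 0 < c₀ := by
    refine hc₀.lt_of_ne fun hzero => ?_
    subst hzero
    obtain ⟨i, -, hi⟩ := Finset.exists_lt_of_sum_lt (by simpa using hpos :
      ∑ _i : ι, (0 : ℝ) < ∑ i, c i)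
    have : 0 < ∑ i, c i * f i x₀ :=
      Finset.sum_pos' (fun i _ => mul_nonneg (hc i) (hx₀ i).le)
        ⟨i, Finset.mem_univ i, mul_pos hi (hx₀ i)⟩
    linarith [h x₀]
  refine ⟨fun i => c i / c₀, fun i => div_nonneg (hc i) hc₀, fun x => ?_⟩
  simp only [div_mul_eq_mul_div, ← Finset.sum_div, sub_nonneg, div_le_iff₀ hc₀']
  linarith [h x]

theorem not_forall_neg_cons_add {X : Type*} {p : ℕ} {f₀ : X → ℝ} {f : Fin p → X → ℝ}
    {Z : Set (Fin (p + 1) → ℝ)} (hZ : Z ⊆ {z | ∀ i, 0 ≤ z i})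
    (hI : ∀ x, (∀ i, 0 ≤ f i x) → 0 ≤ f₀ x) (x : X) {ζ : Fin (p + 1) → ℝ} (hζ : ζ ∈ Z) :
    ¬ ∀ j, (Fin.cons (f₀ x) (fun i => -f i x) + ζ : Fin (p + 1) → ℝ) j < 0 := by
  intro hneg
  have hf : ∀ i, 0 ≤ f i x := fun i => by
    have := hneg i.succ
    simp only [Pi.add_apply, Fin.cons_succ] at this
    linarith [hZ hζ i.succ]
  have := hneg 0
  simp only [Pi.add_apply, Fin.cons_zero] at this
  linarith [hI x hf, hZ hζ 0]

theorem s_procedure_convexifier (n p : ℕ)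
    (f0 : (Fin n → ℝ) → ℝ) (f : Fin p → (Fin n → ℝ) → ℝ)
    (hS : ∃ x0 : Fin n → ℝ, ∀ i, 0 < f i x0)
    (Z : Set (Fin (p + 1) → ℝ)) (hZ : Z ⊆ {z | ∀ i, 0 ≤ z i}) (h0Z : (0 : Fin (p + 1) → ℝ) ∈ Z)
    (hconv : Convex ℝ {w : Fin (p + 1) → ℝ | ∃ t : ℝ, 0 ≤ t ∧
      ∃ s ∈ ({z : Fin (p + 1) → ℝ | ∃ x, z = Fin.cons (f0 x) (fun i => -(f i x))} + Z :
        Set (Fin (p + 1) → ℝ)), w = t • s})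
    (hI : ∀ x, (∀ i, 0 ≤ f i x) → 0 ≤ f0 x) :
    ∃ α : Fin p → ℝ, (∀ i, 0 ≤ α i) ∧ ∀ x, 0 ≤ f0 x - ∑ i, α i * f i x := by
  set C := {w : Fin (p + 1) → ℝ | ∃ t : ℝ, 0 ≤ t ∧
      ∃ s ∈ ({z : Fin (p + 1) → ℝ | ∃ x, z = Fin.cons (f0 x) (fun i => -(f i x))} + Z :
        Set (Fin (p + 1) → ℝ)), w = t • s}
  have hmem : ∀ x, (Fin.cons (f0 x) (fun i => -(f i x)) : Fin (p + 1) → ℝ) ∈ C := fun x =>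
    ⟨1, zero_le_one, _, add_mem_add ⟨x, rfl⟩ h0Z, by simp⟩
  have hcone : ∀ t : ℝ, 0 < t → ∀ w ∈ C, t • w ∈ C := by
    rintro t ht _ ⟨t', ht', s, hs, rfl⟩
    exact ⟨t * t', by positivity, s, hs, smul_smul t t' s⟩
  have hdisj : Disjoint (univ.pi fun _ => Iio 0) C := by
    rw [disjoint_left]
    rintro _ hw ⟨t, ht, _, ⟨_, ⟨x, rfl⟩, ζ, hζ, rfl⟩, rfl⟩
    exact not_forall_neg_cons_add hZ hI x hζ fun j => neg_of_mul_neg_right (hw j (mem_univ j)) ht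
  obtain ⟨φ, hφO, hφC⟩ := exists_dual_neg_on_nonneg_on_of_disjoint_cone
    (convex_pi fun _ _ => convex_Iio 0) (isOpen_set_pi finite_univ fun _ _ => isOpen_Iio) hconv
    ⟨0, le_rfl, _, add_mem_add ⟨0, rfl⟩ h0Z, (zero_smul ℝ _).symm⟩ hcone hdisj
  obtain ⟨hc, hsum⟩ := apply_single_nonneg_and_sum_pos_of_neg_on_negOrthant φ hφO
  refine exists_nonneg_multipliers_of_fritzJohn hS (hc 0) (fun i => hc i.succ)
    (by rwa [← Fin.sum_univ_succ (f := fun j => φ (Pi.single j 1))]) fun x => ?_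
  have := hφC _ (hmem x)
  rw [← φ.coe_coe, LinearMap.apply_eq_sum_mul_apply_single, Fin.sum_univ_succ] at this
  simp only [ContinuousLinearMap.coe_coe, Fin.cons_zero, Fin.cons_succ, mul_neg,
    Finset.sum_neg_distrib] at this
  linarith
end

section
/- Let f₀ : ℝⁿ → ℝ be convex and f₁, ..., fₚ : ℝⁿ → ℝ be concave, and suppose there exists x₀ with fᵢ(x₀) > 0 for all i = 1,...,p. If (fᵢ(x) ≥ 0 for all i = 1,...,p) implies f₀(x) ≥ 0 for all x ∈ ℝⁿ, then there exist α₁,...,αₚ ≥ 0 such that f₀(x) - Σᵢ αᵢ fᵢ(x) ≥ 0 for all x ∈ ℝⁿ. -/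
/-!
The set of `(r, s) ∈ ℝ × ℝᵖ` for which some `x` has `f₀ x < r` and `sᵢ < fᵢ x` for all `i` is
open and convex, by convexity of `f₀` and concavity of the `fᵢ`, and the hypothesis says exactly
that it misses the origin. A linear functional separating it from the origin has coordinates
`-μ₀, μ₁, …, μₚ` with all `μ` nonnegative, not all zero, and `∑ μᵢ fᵢ ≤ μ₀ f₀` everywhere
(Fritz John multipliers). At a Slater point the left side is positive unless every `μᵢ` vanishes,
so `μ₀ > 0`, and `αᵢ = μᵢ / μ₀` works.
-/

open Set Filter Topology

lemma nonpos_of_forall_pos_add_mul_neg {a b : ℝ} (h : ∀ t > 0, a + t * b < 0) :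
    a ≤ 0 ∧ b ≤ 0 := by
  constructor
  · have hlim : Tendsto (fun t => a + t * b) (𝓝[>] 0) (𝓝 a) :=
      tendsto_nhdsWithin_of_tendsto_nhds <|
        (by fun_prop : Continuous fun t : ℝ => a + t * b).tendsto' 0 a (by simp)
    exact le_of_tendsto hlim (eventually_nhdsWithin_of_forall fun t ht => (h t ht).le)
  · by_contra! hb
    have := h ((|a| + 1) / b) (by positivity)
    rw [div_mul_cancel₀ _ hb.ne'] at this
    linarith [neg_abs_le a]

lemma LinearMap.apply_prod_pi {ι : Type*} [Fintype ι] [DecidableEq ι]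
    (φ : (ℝ × (ι → ℝ)) →ₗ[ℝ] ℝ) (r : ℝ) (s : ι → ℝ) :
    φ (r, s) = φ (1, 0) * r + ∑ i, φ (0, Pi.single i 1) * s i := by
  have hr : (r, (0 : ι → ℝ)) = r • ((1 : ℝ), (0 : ι → ℝ)) := by simp
  have hs : ((0 : ℝ), s) = ∑ i, s i • ((0 : ℝ), (Pi.single i 1 : ι → ℝ)) := by
    ext j <;> simp [Prod.fst_sum, Prod.snd_sum, Finset.sum_apply, Pi.single_apply]
  rw [← Prod.fst_add_snd (r, s), map_add, hr, hs, map_sum, map_smul]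
  simp only [map_smul, smul_eq_mul, mul_comm]

lemma LinearMap.nonpos_of_forall_add_smul_mem {M : Type*} [AddCommGroup M] [Module ℝ M]
    (φ : M →ₗ[ℝ] ℝ) {s : Set M} (hφ : ∀ q ∈ s, φ q < 0) (q v : M)
    (h : ∀ t > (0 : ℝ), q + t • v ∈ s) : φ q ≤ 0 ∧ φ v ≤ 0 :=
  nonpos_of_forall_pos_add_mul_neg fun t ht => by simpa using hφ _ (h t ht)

variable {E ι : Type*}

def strictValueSet (f0 : E → ℝ) (f : ι → E → ℝ) : Set (ℝ × (ι → ℝ)) :=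
  {q | ∃ x, f0 x < q.1 ∧ ∀ i, q.2 i < f i x}

variable {f0 : E → ℝ} {f : ι → E → ℝ}

lemma isOpen_strictValueSet [Finite ι] : IsOpen (strictValueSet f0 f) := by
  have : strictValueSet f0 f = ⋃ x, Ioi (f0 x) ×ˢ univ.pi fun i => Iio (f i x) := by
    ext q
    simp [strictValueSet]
  rw [this]
  exact isOpen_iUnion fun x => isOpen_Ioi.prod (isOpen_set_pi finite_univ fun i _ => isOpen_Iio)

lemma zero_notMem_strictValueSet (h : ∀ x, (∀ i, 0 < f i x) → 0 ≤ f0 x) :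
    (0 : ℝ × (ι → ℝ)) ∉ strictValueSet f0 f := fun ⟨x, hx0, hx⟩ =>
  (h x hx).not_gt hx0

variable [AddCommMonoid E] [Module ℝ E]

lemma convex_strictValueSet (hf0 : ConvexOn ℝ univ f0) (hf : ∀ i, ConcaveOn ℝ univ (f i)) :
    Convex ℝ (strictValueSet f0 f) := by
  rintro q ⟨x, hx0, hx⟩ q' ⟨x', hx0', hx'⟩ a b ha hb hab
  refine ⟨a • x + b • x', ?_, fun i => ?_⟩
  · simpa using (hf0.convex_strict_epigraph (show (x, q.1) ∈ _ from ⟨mem_univ x, hx0⟩)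
      (show (x', q'.1) ∈ _ from ⟨mem_univ x', hx0'⟩) ha hb hab).2
  · simpa using ((hf i).convex_strict_hypograph (show (x, q.2 i) ∈ _ from ⟨mem_univ x, hx i⟩)
      (show (x', q'.2 i) ∈ _ from ⟨mem_univ x', hx' i⟩) ha hb hab).2

theorem ConvexOn.exists_fritzJohn_multipliers [Fintype ι] (hf0 : ConvexOn ℝ univ f0)
    (hf : ∀ i, ConcaveOn ℝ univ (f i)) (h : ∀ x, (∀ i, 0 < f i x) → 0 ≤ f0 x) :
    ∃ μ0 : ℝ, ∃ μ : ι → ℝ, 0 ≤ μ0 ∧ (∀ i, 0 ≤ μ i) ∧ (μ0 ≠ 0 ∨ μ ≠ 0) ∧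
      ∀ x, ∑ i, μ i * f i x ≤ μ0 * f0 x := by
  classical
  obtain ⟨φ, hφ⟩ := geometric_hahn_banach_open_point (convex_strictValueSet hf0 hf)
    isOpen_strictValueSet (zero_notMem_strictValueSet h)
  set L : (ℝ × (ι → ℝ)) →ₗ[ℝ] ℝ := φ.toLinearMap
  have hL : ∀ q ∈ strictValueSet f0 f, L q < 0 := by simpa [L] using hφ
  have ray := L.nonpos_of_forall_add_smul_mem hL
  set q0 : ℝ × (ι → ℝ) := (f0 0 + 1, fun i => f i 0 - 1)
  have hq0 : q0 ∈ strictValueSet f0 f := ⟨0, by simp [q0], fun i => by simp [q0]⟩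
  -- The set only grows when `r` is raised or `s` lowered, and `(f0 x, f x)` lies in its
  -- closure; `ray` turns each of these facts into a sign condition on `L`.
  refine ⟨-L (1, 0), fun i => L (0, Pi.single i 1), ?_, fun i => ?_, ?_, fun x => ?_⟩
  · have := (ray q0 (1, 0) fun t ht => ⟨0, by simp [q0]; linarith, by simp [q0]⟩).2
    linarith
  · have := (ray q0 (-(0, Pi.single i 1)) fun t ht => ⟨0, by simp [q0], fun j => by
      simp [q0, Pi.single_apply]; split_ifs <;> linarith⟩).2
    rwa [map_neg, neg_nonpos] at this
  · by_contra! hzero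
    refine (hL q0 hq0).ne ?_
    rw [LinearMap.apply_prod_pi]
    simp [neg_eq_zero.1 hzero.1, funext_iff.1 hzero.2]
  · have := (ray (f0 x, fun i => f i x) (1, -1) fun t ht =>
      ⟨x, by simp; linarith, fun i => by simp; linarith⟩).1
    rw [LinearMap.apply_prod_pi] at this
    beta_reduce
    linarith

theorem s_procedure_convex_concave (n p : ℕ)
    (f0 : (Fin n → ℝ) → ℝ) (f : Fin p → (Fin n → ℝ) → ℝ)
    (hf0 : ConvexOn ℝ Set.univ f0) (hf : ∀ i, ConcaveOn ℝ Set.univ (f i))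
    (hS : ∃ x0 : Fin n → ℝ, ∀ i, 0 < f i x0)
    (hI : ∀ x, (∀ i, 0 ≤ f i x) → 0 ≤ f0 x) :
    ∃ α : Fin p → ℝ, (∀ i, 0 ≤ α i) ∧ ∀ x, 0 ≤ f0 x - ∑ i, α i * f i x := by
  obtain ⟨x0, hx0⟩ := hS
  obtain ⟨μ0, μ, hμ0, hμ, hne, hμf⟩ :=
    hf0.exists_fritzJohn_multipliers hf fun x hx => hI x fun i => (hx i).le
  have hμ0_pos : 0 < μ0 := by
    refine hμ0.lt_of_ne' fun h0 => ?_
    obtain ⟨i, hi⟩ := Function.ne_iff.1 (hne.resolve_left (not_not_intro h0))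
    have hpos : 0 < ∑ i, μ i * f i x0 :=
      Finset.sum_pos' (fun j _ => mul_nonneg (hμ j) (hx0 j).le)
        ⟨i, Finset.mem_univ i, mul_pos ((hμ i).lt_of_ne' hi) (hx0 i)⟩
    linarith [hμf x0, show μ0 * f0 x0 = 0 by rw [h0, zero_mul]]
  refine ⟨fun i => μ i / μ0, fun i => div_nonneg (hμ i) hμ0_pos.le, fun x => ?_⟩
  simp_rw [div_mul_eq_mul_div, ← Finset.sum_div]
  rw [sub_nonneg, div_le_iff₀ hμ0_pos, mul_comm]
  exact hμf x
end

section
/- Define q₀, q₁ : ℝ² → ℝ by q₀(x,y) = 2x² - y² and q₁(x,y) = x + y. Then the set Im(q₀, q₁) = {(u,v) : u ≥ -2v²} is not convex, but Im(q₀, -q₁) + ℝ₊² = ℝ². -/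
open Pointwise

theorem epi_convex_but_image_not_convex :
    ¬ Convex ℝ {uv : ℝ × ℝ | ∃ xy : ℝ × ℝ,
        uv = (2 * xy.1 ^ 2 - xy.2 ^ 2, xy.1 + xy.2)} ∧
    ({uv : ℝ × ℝ | ∃ xy : ℝ × ℝ,
        uv = (2 * xy.1 ^ 2 - xy.2 ^ 2, -(xy.1 + xy.2))} +
      {z : ℝ × ℝ | 0 ≤ z.1 ∧ 0 ≤ z.2} : Set (ℝ × ℝ)) = Set.univ := by
  constructor
  · intro h
    have h1 : ((-2 : ℝ), (1 : ℝ)) ∈ {uv : ℝ × ℝ | ∃ xy : ℝ × ℝ,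
        uv = (2 * xy.1 ^ 2 - xy.2 ^ 2, xy.1 + xy.2)} := ⟨(-1, 2), by norm_num⟩
    have h2 : ((-2 : ℝ), (-1 : ℝ)) ∈ {uv : ℝ × ℝ | ∃ xy : ℝ × ℝ,
        uv = (2 * xy.1 ^ 2 - xy.2 ^ 2, xy.1 + xy.2)} := ⟨(1, -2), by norm_num⟩
    have hm := h h1 h2 (by norm_num : (0:ℝ) ≤ (1/2 : ℝ))
      (by norm_num : (0:ℝ) ≤ (1/2 : ℝ)) (by norm_num)
    obtain ⟨⟨x, y⟩, hxy⟩ := hm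
    simp only [Prod.smul_mk, Prod.mk_add_mk, Prod.mk.injEq, smul_eq_mul] at hxy
    obtain ⟨he1, he2⟩ := hxy
    have hyx : y = -x := by linarith
    rw [hyx] at he1
    nlinarith [sq_nonneg x]
  · ext ⟨u, v⟩
    simp only [Set.mem_univ, iff_true, Set.mem_add]
    set y : ℝ := |u| + |v| + 1 with hy
    have hu := abs_nonneg u
    have hv := abs_nonneg v
    have hy1 : 1 ≤ y := by simp only [hy]; linarith
    have hyv : -v ≤ y := by
      have := neg_abs_le v; simp only [hy]; linarith
    have hyu : -u ≤ y ^ 2 := by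
      have h1 : y ≤ y ^ 2 := by nlinarith
      have := neg_abs_le u; linarith
    refine ⟨(-y^2, -y), ⟨(0, y), by norm_num⟩, (u + y^2, v + y), ⟨by dsimp; linarith, by dsimp; linarith⟩, ?_⟩
    exact Prod.ext (by dsimp; ring) (by dsimp; ring)
end

section
/- Let f₀, f₁, ..., fₚ : ℝⁿ → ℝ and ℱ = Im(f₀, -f₁, ..., -fₚ). Suppose ℝ₊ · ℱ is convex and there exists x₀ with fᵢ(x₀) > 0 for all i = 1,...,p. If (fᵢ(x) ≥ 0 for all i = 1,...,p) implies f₀(x) ≥ 0 for all x ∈ ℝⁿ, then there exist α₁,...,αₚ ≥ 0 such that f₀(x) - Σᵢ αᵢ fᵢ(x) ≥ 0 for all x ∈ ℝⁿ. -/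
private lemma aux_le (c a : ℝ) (h : ∀ ε : ℝ, 0 < ε → a + ε * c < 0) : a ≤ 0 := by
  by_contra hb
  push_neg at hb
  rcases le_or_gt 0 c with hc | hc
  · have := h 1 one_pos; nlinarith
  · have hε : 0 < a / (-2 * c) := div_pos hb (by linarith)
    have h2 := h _ hε
    have hcne : c ≠ 0 := ne_of_lt hc
    have h3 : a + a / (-2 * c) * c = a / 2 := by field_simp; ring
    linarith

theorem s_procedure_conical_convex (n p : ℕ)
    (f0 : (Fin n → ℝ) → ℝ) (f : Fin p → (Fin n → ℝ) → ℝ)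
    (hconv : Convex ℝ {w : Fin (p + 1) → ℝ | ∃ t : ℝ, 0 ≤ t ∧
      ∃ z ∈ {z : Fin (p + 1) → ℝ | ∃ x, z = Fin.cons (f0 x) (fun i => -(f i x))}, w = t • z})
    (hS : ∃ x0 : Fin n → ℝ, ∀ i, 0 < f i x0)
    (hI : ∀ x, (∀ i, 0 ≤ f i x) → 0 ≤ f0 x) :
    ∃ α : Fin p → ℝ, (∀ i, 0 ≤ α i) ∧ ∀ x, 0 ≤ f0 x - ∑ i, α i * f i x := by
  obtain ⟨x0, hx0⟩ := hS
  set K : Set (Fin (p + 1) → ℝ) := {w : Fin (p + 1) → ℝ | ∃ t : ℝ, 0 ≤ t ∧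
      ∃ z ∈ {z : Fin (p + 1) → ℝ | ∃ x, z = Fin.cons (f0 x) (fun i => -(f i x))}, w = t • z}
    with hKdef
  set O : Set (Fin (p + 1) → ℝ) := Set.pi Set.univ (fun _ => Set.Iio (0:ℝ)) with hOdef
  have hOmem : ∀ w : Fin (p+1) → ℝ, w ∈ O ↔ ∀ j, w j < 0 := by
    intro w; simp [hOdef, Set.mem_pi]
  have hOconv : Convex ℝ O := convex_pi (fun i _ => convex_Iio 0)
  have hOopen : IsOpen O := isOpen_set_pi Set.finite_univ (fun i _ => isOpen_Iio)
  -- K contains 0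
  have h0K : (0 : Fin (p+1) → ℝ) ∈ K := by
    refine ⟨0, le_refl 0, Fin.cons (f0 x0) (fun i => -(f i x0)), ⟨x0, rfl⟩, by simp⟩
  -- disjoint
  have hdisj : Disjoint O K := by
    rw [Set.disjoint_left]
    rintro w hwO ⟨t, ht, z, ⟨x, rfl⟩, rfl⟩
    rw [hOmem] at hwO
    rcases eq_or_lt_of_le ht with rfl | htpos
    · have := hwO 0; simp at this
    · have hz : ∀ j, (Fin.cons (f0 x) (fun i => -(f i x)) : Fin (p+1) → ℝ) j < 0 := by
        intro j
        have hj := hwO j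
        rw [Pi.smul_apply, smul_eq_mul] at hj
        nlinarith
      have hfx : ∀ i, 0 ≤ f i x := by
        intro i
        have := hz i.succ
        simp [Fin.cons_succ] at this
        linarith
      have h0 := hI x hfx
      have := hz 0
      simp [Fin.cons_zero] at this
      linarith
  obtain ⟨φ, u, hu1, hu2⟩ := geometric_hahn_banach_open hOconv hOopen hconv hdisj
  have hu0 : u ≤ 0 := by have := hu2 0 h0K; simpa using this
  set c : ℝ := φ (fun _ => 1) with hc
  have hones : ∀ ε : ℝ, 0 < ε → -(ε * c) < u := by
    intro ε hε
    have hmem : (fun _ : Fin (p+1) => -ε) ∈ O := by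
      rw [hOmem]; intro j; linarith
    have := hu1 _ hmem
    have heq : φ (fun _ : Fin (p+1) => -ε) = -(ε * c) := by
      have : (fun _ : Fin (p+1) => -ε) = (-ε) • (fun _ : Fin (p+1) => (1:ℝ)) := by
        funext j; simp
      rw [this, map_smul, smul_eq_mul, ← hc]; ring
    linarith [heq ▸ this]
  have hu0' : 0 ≤ u := by
    have := aux_le (-c) (-u) (by intro ε hε; have := hones ε hε; linarith)
    linarith
  have huz : u = 0 := le_antisymm hu0 hu0'
  set lam : Fin (p+1) → ℝ := fun j => φ (fun k => if j = k then 1 else 0) with hlam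
  have hrep : ∀ z : Fin (p+1) → ℝ, φ z = ∑ j, z j * lam j := by
    intro z
    have := LinearMap.pi_apply_eq_sum_univ (φ : (Fin (p+1) → ℝ) →ₗ[ℝ] ℝ) z
    simpa [smul_eq_mul, hlam] using this
  -- all lam nonneg
  have hlamnn : ∀ j, 0 ≤ lam j := by
    intro j
    have key : ∀ ε : ℝ, 0 < ε → -(lam j) + ε * (-c) < 0 := by
      intro ε hε
      have hmem : (fun k => (if j = k then (-1:ℝ) else 0) + (-ε)) ∈ O := by
        rw [hOmem]; intro k; by_cases h : j = k <;> simp [h] <;> linarith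
      have hlt := hu1 _ hmem
      rw [huz] at hlt
      have heq : φ (fun k => (if j = k then (-1:ℝ) else 0) + (-ε))
          = -(lam j) + ε * (-c) := by
        have hdecomp : (fun k => (if j = k then (-1:ℝ) else 0) + (-ε))
            = (-1 : ℝ) • (fun k => if j = k then (1:ℝ) else 0) + (-ε) • (fun _ => (1:ℝ)) := by
          funext k; by_cases h : j = k <;> simp [h]
        rw [hdecomp, map_add, map_smul, map_smul]
        simp only [smul_eq_mul, hlam, hc]
        ring
      linarith [heq ▸ hlt]
    have := aux_le (-c) (-(lam j)) key
    linarith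
  -- key inequality for each x
  have hkey : ∀ x, 0 ≤ f0 x * lam 0 - ∑ i, f i x * lam i.succ := by
    intro x
    have hmem : Fin.cons (f0 x) (fun i => -(f i x)) ∈ K :=
      ⟨1, zero_le_one, _, ⟨x, rfl⟩, (one_smul _ _).symm⟩
    have := hu2 _ hmem
    rw [huz, hrep] at this
    rw [Fin.sum_univ_succ] at this
    simp only [Fin.cons_zero, Fin.cons_succ] at this
    have hsum : ∑ i : Fin p, -(f i x) * lam i.succ = -∑ i : Fin p, f i x * lam i.succ := by
      rw [← Finset.sum_neg_distrib]; apply Finset.sum_congr rfl; intros; ring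
    rw [hsum] at this
    linarith
  -- lam 0 > 0
  have hlam0 : 0 < lam 0 := by
    rcases lt_or_eq_of_le (hlamnn 0) with h | h
    · exact h
    · exfalso
      have hx0key := hkey x0
      rw [← h] at hx0key
      have hterm : ∀ i ∈ Finset.univ, (0:ℝ) ≤ f i x0 * lam i.succ := by
        intro i _; exact mul_nonneg (hx0 i).le (hlamnn i.succ)
      have hzero : ∀ i ∈ Finset.univ, f i x0 * lam i.succ = 0 := by
        apply (Finset.sum_eq_zero_iff_of_nonneg hterm).mp
        have hsumnn := Finset.sum_nonneg hterm
        linarith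
      have hlams : ∀ j : Fin (p+1), lam j = 0 := by
        intro j
        refine Fin.cases ?_ ?_ j
        · exact h.symm
        · intro i
          have := hzero i (Finset.mem_univ i)
          have hfi := hx0 i
          rcases mul_eq_zero.mp this with h' | h'
          · linarith
          · exact h'
      -- contradiction with φ(-1) < u = 0
      have hmem : (fun _ : Fin (p+1) => (-1:ℝ)) ∈ O := by rw [hOmem]; intro j; norm_num
      have hlt := hu1 _ hmem
      rw [huz, hrep] at hlt
      simp [hlams] at hlt
  -- conclude
  refine ⟨fun i => lam i.succ / lam 0, fun i => div_nonneg (hlamnn i.succ) hlam0.le, ?_⟩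
  intro x
  have hk := hkey x
  rw [sub_nonneg]
  have hsum : ∑ i, lam i.succ / lam 0 * f i x = (∑ i, f i x * lam i.succ) / lam 0 := by
    rw [Finset.sum_div]; apply Finset.sum_congr rfl; intros; ring
  rw [hsum, div_le_iff₀ hlam0]
  nlinarith
end
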